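/- Let G be a simple graph, c a 2-coloring of its edges, and φ an automorphism of G. For every monochromatic component a of (G,c), the set S(a) of monochromatic components induces a connected subgraph of the component graph Comp(G,c). -/

import Mathlib

open SimpleGraph

variable {V : Type*}

/-- The spanning subgraph of `G` consisting of the edges of color `t`. -/
def monoSubgraph (G : SimpleGraph V) (c : Sym2 V → Bool) (t : Bool) : SimpleGraph V where
  Adj u v := G.Adj u v ∧ c s(u, v) = t
  symm := ⟨fun u v h => ⟨h.1.symm, by rw [Sym2.eq_swap]; exact h.2⟩⟩
  loopless := ⟨fun u h => G.irrefl h.1⟩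

/-- A monochromatic component of `(G, c)`: a color together with a connected component
of the spanning subgraph of edges of that color. -/
abbrev MonoComp (G : SimpleGraph V) (c : Sym2 V → Bool) :=
  Σ t : Bool, (monoSubgraph G c t).ConnectedComponent

/-- The vertex `x` belongs to the monochromatic component `a`. -/
def MonoComp.Mem {G : SimpleGraph V} {c : Sym2 V → Bool} (a : MonoComp G c) (x : V) : Prop :=
  (monoSubgraph G c a.1).connectedComponentMk x = a.2

/-- The component graph `Comp(G, c)`: vertices are the monochromatic components,
two of them adjacent iff they are distinct and share a vertex of `G`. -/
def compGraph (G : SimpleGraph V) (c : Sym2 V → Bool) : SimpleGraph (MonoComp G c) where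
  Adj a b := a ≠ b ∧ ∃ x : V, a.Mem x ∧ b.Mem x
  symm := ⟨fun a b h => ⟨h.1.symm, h.2.imp fun x hx => ⟨hx.2, hx.1⟩⟩⟩
  loopless := ⟨fun a h => h.1 rfl⟩

/-- The number of color changes along a list of edges: the number of consecutive
pairs receiving different colors. -/
def colorChanges (c : Sym2 V → Bool) : List (Sym2 V) → ℕ
  | e₁ :: e₂ :: rest => (if c e₁ = c e₂ then 0 else 1) + colorChanges c (e₂ :: rest)
  | _ => 0

/-- The set `S(a)` of monochromatic components containing an image under `φ` of a
vertex of the monochromatic component `a`. -/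
def Sset {G : SimpleGraph V} (φ : G ≃g G) (c : Sym2 V → Bool) (a : MonoComp G c) :
    Set (MonoComp G c) :=
  {b | ∃ x : V, a.Mem x ∧ b.Mem (φ x)}

/-!
If `u v` is an edge of the component `a`, then `φ u φ v` is an edge of `G`, so some
monochromatic component `d` contains both `φ u` and `φ v`, and `d ∈ S(a)`. Every member of
`S(a)` through `φ u` meets `d`, and so does every member through `φ v`; hence they are linked
inside `S(a)`, and this propagates along the paths of `a`.
-/

variable {G : SimpleGraph V} {c : Sym2 V → Bool}

lemma MonoComp.Mem.of_reachable {a : MonoComp G c} {x y : V} (hx : a.Mem x)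
    (hxy : (monoSubgraph G c a.1).Reachable x y) : a.Mem y :=
  (ConnectedComponent.sound hxy).symm.trans hx

lemma MonoComp.exists_mem_of_adj {u v : V} (huv : G.Adj u v) :
    ∃ d : MonoComp G c, d.Mem u ∧ d.Mem v :=
  ⟨⟨c s(u, v), (monoSubgraph G c _).connectedComponentMk v⟩,
    ConnectedComponent.sound (Adj.reachable ⟨huv, rfl⟩), rfl⟩

lemma compGraph_induce_reachable_of_mem {s : Set (MonoComp G c)} {b₁ b₂ : MonoComp G c}
    (h₁ : b₁ ∈ s) (h₂ : b₂ ∈ s) {v : V} (m₁ : b₁.Mem v) (m₂ : b₂.Mem v) :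
    ((compGraph G c).induce s).Reachable ⟨b₁, h₁⟩ ⟨b₂, h₂⟩ := by
  by_cases h : b₁ = b₂
  · subst h
    rfl
  · exact Adj.reachable (show (compGraph G c).Adj b₁ b₂ from ⟨h, v, m₁, m₂⟩)

lemma Sset_induce_reachable (φ : G ≃g G) {a : MonoComp G c} {x y : V} (hx : a.Mem x)
    (hy : a.Mem y) {b b' : MonoComp G c} (hb : b.Mem (φ x)) (hb' : b'.Mem (φ y)) :
    ((compGraph G c).induce (Sset φ c a)).Reachable ⟨b, x, hx, hb⟩ ⟨b', y, hy, hb'⟩ := by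
  have hxy := (reachable_iff_reflTransGen x y).1 <| ConnectedComponent.exact (hx.trans hy.symm)
  induction hxy generalizing b' with
  | refl => exact compGraph_induce_reachable_of_mem _ _ hb hb'
  | @tail y z _ hyz ih =>
    have hy : a.Mem y := hy.of_reachable hyz.reachable.symm
    obtain ⟨d, hdy, hdz⟩ := MonoComp.exists_mem_of_adj (c := c) (φ.map_adj_iff.2 hyz.1)
    exact (ih hy hdy).trans (compGraph_induce_reachable_of_mem _ _ hdz hb')

/-- For every monochromatic component `a`, the set `S(a)` induces a
connected subgraph of the component graph. -/
theorem Sset_induce_connected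
    {V : Type*} (G : SimpleGraph V) (c : Sym2 V → Bool) (φ : G ≃g G)
    (a : MonoComp G c) :
    ((compGraph G c).induce (Sset φ c a)).Connected := by
  obtain ⟨x₀, hx₀⟩ := a.2.exists_rep
  have : Nonempty (Sset φ c a) := ⟨⟨⟨a.1, (monoSubgraph G c a.1).connectedComponentMk (φ x₀)⟩,
    x₀, hx₀, rfl⟩⟩
  exact ⟨fun ⟨b, x, hx, hb⟩ ⟨b', y, hy, hb'⟩ => Sset_induce_reachable φ hx hy hb hb'⟩
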